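/- Let H be the discrete Heisenberg group, the group of 3×3 upper unitriangular matrices with integer entries, let a ∈ H be the matrix with (1,2)-entry 1 and (1,3)-, (2,3)-entries 0, and b ∈ H the matrix with (2,3)-entry 1 and (1,2)-, (1,3)-entries 0, and let d be the word metric on H with respect to the symmetric generating set S = {a, a⁻¹, b, b⁻¹}. Then there exists a weakly-geodesic ray γ : T → H such that for every geodesic ray γ' : T' → H there exist y, z ∈ H with lim_{t→∞, t∈T} (d(γ(t),y) − d(γ(t),z)) ≠ lim_{t→∞, t∈T'} (d(γ'(t),y) − d(γ'(t),z)); that is, the metric boundary of this Cayley graph of the discrete Heisenberg group contains a point which is not a Busemann point. -/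

import Mathlib

open Filter Topology

/-- `T` is a valid domain for a ray: an unbounded subset of `[0,∞)` containing `0`. -/
def IsRayDomain (T : Set ℝ) : Prop :=
  T ⊆ Set.Ici (0 : ℝ) ∧ 0 ∈ T ∧ ∀ M : ℝ, ∃ t ∈ T, M < t

/-- A weakly-geodesic ray for the distance function `d`. -/
def WeaklyGeodesicRay {X : Type*} (d : X → X → ℝ) (T : Set ℝ) (γ : ℝ → X) : Prop :=
  ∀ y : X, ∀ ε : ℝ, 0 < ε → ∃ N : ℝ, ∀ s ∈ T, ∀ t ∈ T, N ≤ s → N ≤ t →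
    |d (γ t) (γ 0) - t| < ε ∧ |d (γ t) y - d (γ s) y - (t - s)| < ε

/-- An almost-geodesic ray for the distance function `d`. -/
def AlmostGeodesicRay {X : Type*} (d : X → X → ℝ) (T : Set ℝ) (γ : ℝ → X) : Prop :=
  ∀ ε : ℝ, 0 < ε → ∃ N : ℝ, ∀ s ∈ T, ∀ t ∈ T, N ≤ s → s ≤ t →
    |d (γ t) (γ s) + d (γ s) (γ 0) - t| < ε

/-- A geodesic ray for the distance function `d`. -/
def GeodesicRay {X : Type*} (d : X → X → ℝ) (T : Set ℝ) (γ : ℝ → X) : Prop :=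
  ∀ s ∈ T, ∀ t ∈ T, d (γ s) (γ t) = |s - t|

/-- `L` is the limit of `d(γ(t),y) - d(γ(t),z)` as `t → ∞` along `T`. -/
def RayLimit {X : Type*} (d : X → X → ℝ) (T : Set ℝ) (γ : ℝ → X) (y z : X) (L : ℝ) : Prop :=
  Tendsto (fun t => d (γ t) y - d (γ t) z) (atTop ⊓ 𝓟 T) (𝓝 L)

/-- The word metric on a group `G` with respect to a generating set `S`:
`wordDist S g h` is the least `n` such that `g⁻¹ * h` is a product of `n` elements of `S`. -/
noncomputable def wordDist {G : Type*} [Group G] (S : Set G) (g h : G) : ℕ :=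
  sInf {n | ∃ l : List G, l.length = n ∧ (∀ x ∈ l, x ∈ S) ∧ l.prod = g⁻¹ * h}

/-- The set of 3×3 upper unitriangular integer matrices. -/
def Unitriangular3 : Set (Matrix (Fin 3) (Fin 3) ℤ) :=
  {A | A 0 0 = 1 ∧ A 1 1 = 1 ∧ A 2 2 = 1 ∧ A 1 0 = 0 ∧ A 2 0 = 0 ∧ A 2 1 = 0}

/-! Along `ψ n = (n, 1, ⌊n/2⌋)` one has `d(ψ n, v) = n + 1 + |v.y| - v.x` for all large `n`, so `ψ`
is a weakly-geodesic ray with limit function `h v = |v.y| - v.x`. Along a geodesic ray `γ`, the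
integer `d(γ t, v) - t` is nonincreasing and bounded below, hence eventually constant. If these
constants were `h` up to an additive constant, then a late point `g = γ t` would satisfy
`d(1, g) = g.x - |g.y|`. Since `d(1, g) ≥ |g.x| + |g.y|`, with equality only when `g.z` lies between
`0` and `g.x * g.y`, this forces `g = a ^ k`; but `d(a ^ k, (0, -1, 1)) = k + 3` while `h` predicts
`k + 1`. -/

section WordMetric

variable {G : Type*} [Group G] {S : Set G}

noncomputable def wordLength (S : Set G) (g : G) : ℕ := wordDist S 1 g

theorem wordDist_eq_wordLength (S : Set G) (g h : G) :
    wordDist S g h = wordLength S (g⁻¹ * h) := by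
  simp [wordLength, wordDist]

theorem wordLength_list_prod_le {l : List G} (hl : ∀ s ∈ l, s ∈ S) :
    wordLength S l.prod ≤ l.length :=
  Nat.sInf_le ⟨l, rfl, hl, by simp⟩

theorem exists_list_length_eq_wordLength (hS : Submonoid.closure S = ⊤) (g : G) :
    ∃ l : List G, l.length = wordLength S g ∧ (∀ s ∈ l, s ∈ S) ∧ l.prod = g := by
  obtain ⟨l, hl, rfl⟩ := Submonoid.exists_list_of_mem_closure (hS ▸ Submonoid.mem_top g)
  have hne : {n | ∃ l' : List G, l'.length = n ∧ (∀ s ∈ l', s ∈ S) ∧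
      l'.prod = 1⁻¹ * l.prod}.Nonempty :=
    ⟨l.length, l, rfl, hl, by simp⟩
  simpa [wordLength, wordDist] using Nat.sInf_mem hne

theorem wordLength_mul_le (hS : Submonoid.closure S = ⊤) (g h : G) :
    wordLength S (g * h) ≤ wordLength S g + wordLength S h := by
  obtain ⟨l₁, hlen₁, hl₁, rfl⟩ := exists_list_length_eq_wordLength hS g
  obtain ⟨l₂, hlen₂, hl₂, rfl⟩ := exists_list_length_eq_wordLength hS h
  rw [← hlen₁, ← hlen₂, ← List.length_append, ← List.prod_append]
  exact wordLength_list_prod_le fun s hs => (List.mem_append.1 hs).elim (hl₁ s) (hl₂ s)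

theorem wordLength_inv (hsymm : S⁻¹ ⊆ S) (g : G) : wordLength S g⁻¹ = wordLength S g := by
  have hrev : ∀ g : G, ∀ n ∈ {n | ∃ l : List G, l.length = n ∧ (∀ s ∈ l, s ∈ S) ∧ l.prod = g},
      n ∈ {n | ∃ l : List G, l.length = n ∧ (∀ s ∈ l, s ∈ S) ∧ l.prod = g⁻¹} := by
    rintro g n ⟨l, rfl, hl, rfl⟩
    refine ⟨(l.map (·⁻¹)).reverse, by simp, ?_, (List.prod_inv_reverse l).symm⟩
    intro s hs
    exact hsymm (by simpa using hl _ (by simpa using hs))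
  simp only [wordLength, wordDist, inv_one, one_mul]
  exact congrArg sInf (Set.Subset.antisymm (by simpa using hrev g⁻¹) (hrev g))

theorem wordLength_zpow_le (hsymm : S⁻¹ ⊆ S) {s : G} (hs : s ∈ S) (k : ℤ) :
    wordLength S (s ^ k) ≤ k.natAbs := by
  have hrep : ∀ t ∈ S, ∀ n : ℕ, wordLength S (t ^ n) ≤ n := fun t ht n => by
    simpa using wordLength_list_prod_le (S := S) (l := List.replicate n t)
      fun u hu => (List.eq_of_mem_replicate hu) ▸ ht
  obtain ⟨n, rfl | rfl⟩ := Int.eq_nat_or_neg k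
  · simpa using hrep s hs n
  · simpa [← inv_pow] using hrep s⁻¹ (hsymm (by simpa using hs)) n

theorem wordDist_comm (hsymm : S⁻¹ ⊆ S) (g h : G) : wordDist S g h = wordDist S h g := by
  rw [wordDist_eq_wordLength, ← wordLength_inv hsymm, wordDist_eq_wordLength]
  simp

theorem wordDist_triangle (hS : Submonoid.closure S = ⊤) (g h k : G) :
    wordDist S g k ≤ wordDist S g h + wordDist S h k := by
  simp only [wordDist_eq_wordLength]
  simpa [mul_assoc] using wordLength_mul_le hS (g⁻¹ * h) (h⁻¹ * k)

theorem wordDist_map {K : Type*} [Group K] (e : G ≃* K) (S : Set G) (g h : G) :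
    wordDist (e '' S) (e g) (e h) = wordDist S g h := by
  simp only [wordDist, ← map_inv, ← map_mul]
  congr 1
  ext n
  constructor
  · rintro ⟨l, rfl, hl, hprod⟩
    refine ⟨l.map e.symm, by simp, fun s hs => ?_, ?_⟩
    · obtain ⟨u, hu, rfl⟩ := List.mem_map.1 hs
      obtain ⟨v, hv, rfl⟩ := hl u hu
      simpa using hv
    · rw [← map_list_prod e.symm, hprod, MulEquiv.symm_apply_apply]
  · rintro ⟨l, rfl, hl, hprod⟩
    refine ⟨l.map e, by simp, fun s hs => ?_, by rw [← hprod, map_list_prod]⟩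
    obtain ⟨u, hu, rfl⟩ := List.mem_map.1 hs
    exact ⟨u, hl u hu, rfl⟩

end WordMetric

section Busemann

variable {X : Type*}

/-- Some limit of a weakly-geodesic ray, a point of the metric boundary, is not a Busemann point. -/
def HasNonBusemannPoint (d : X → X → ℝ) : Prop :=
  ∃ T : Set ℝ, ∃ γ : ℝ → X, IsRayDomain T ∧ WeaklyGeodesicRay d T γ ∧
    ∀ (T' : Set ℝ) (γ' : ℝ → X), IsRayDomain T' → GeodesicRay d T' γ' →
      ∃ (y z : X) (L L' : ℝ), RayLimit d T γ y z L ∧ RayLimit d T' γ' y z L' ∧ L ≠ L'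

theorem HasNonBusemannPoint.of_equiv {Y : Type*} {d : X → X → ℝ} {d' : Y → Y → ℝ}
    (e : X ≃ Y) (he : ∀ x y, d' (e x) (e y) = d x y) (h : HasNonBusemannPoint d') :
    HasNonBusemannPoint d := by
  obtain ⟨T, γ, hT, hγ, hne⟩ := h
  refine ⟨T, e.symm ∘ γ, hT, fun y ε hε => ?_, fun T' γ' hT' hγ' => ?_⟩
  · obtain ⟨N, hN⟩ := hγ (e y) ε hε
    exact ⟨N, fun s hs t ht hNs hNt => by simpa [← he] using hN s hs t ht hNs hNt⟩
  · obtain ⟨y, z, L, L', hL, hL', hLL'⟩ := hne T' (e ∘ γ') hT'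
      (fun s hs t ht => by simpa [he] using hγ' s hs t ht)
    refine ⟨e.symm y, e.symm z, L, L', ?_, ?_, hLL'⟩
    · simpa [RayLimit, ← he] using hL
    · simpa [RayLimit, ← he] using hL'

def EventuallyBusemann (d : X → X → ℝ) (T : Set ℝ) (γ : ℝ → X) (f : X → ℝ) : Prop :=
  ∀ y, ∀ᶠ t in atTop ⊓ 𝓟 T, d (γ t) y = t + f y

theorem IsRayDomain.neBot {T : Set ℝ} (hT : IsRayDomain T) : (atTop ⊓ 𝓟 T).NeBot := by
  refine inf_principal_neBot_iff.2 fun U hU => ?_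
  obtain ⟨a, ha⟩ := mem_atTop_sets.1 hU
  obtain ⟨t, htT, hat⟩ := hT.2.2 a
  exact ⟨t, ha t hat.le, htT⟩

theorem eventually_mem_and_ge (T : Set ℝ) (s : ℝ) : ∀ᶠ t in atTop ⊓ 𝓟 T, t ∈ T ∧ s ≤ t :=
  eventually_inf_principal.2 ((eventually_ge_atTop s).mono fun _ hst ht => ⟨ht, hst⟩)

namespace EventuallyBusemann

variable {d : X → X → ℝ} {T : Set ℝ} {γ : ℝ → X} {f : X → ℝ}

theorem rayLimit (hf : EventuallyBusemann d T γ f) (y z : X) :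
    RayLimit d T γ y z (f y - f z) :=
  tendsto_const_nhds.congr' <| (hf y).mp <| (hf z).mono fun t hz hy => by simp only [hy, hz]; ring

theorem weaklyGeodesicRay (hf : EventuallyBusemann d T γ f) (h0 : f (γ 0) = 0) :
    WeaklyGeodesicRay d T γ := by
  intro y ε hε
  obtain ⟨N, hN⟩ := eventually_atTop.1 (eventually_inf_principal.1 ((hf (γ 0)).and (hf y)))
  refine ⟨N, fun s hs t ht hNs hNt => ?_⟩
  obtain ⟨ht0, hty⟩ := hN t hNt ht
  obtain ⟨-, hsy⟩ := hN s hNs hs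
  rw [ht0, hty, hsy, h0]
  constructor <;> simpa using hε

theorem apply_eq_neg (hf : EventuallyBusemann d T γ f) (hT : IsRayDomain T)
    (hγ : GeodesicRay d T γ) {s : ℝ} (hs : s ∈ T) : f (γ s) = -s := by
  have := hT.neBot
  obtain ⟨t, hts, ⟨ht, hst⟩⟩ := ((hf (γ s)).and (eventually_mem_and_ge T s)).exists
  rw [hγ t ht s hs, abs_of_nonneg (sub_nonneg.2 hst)] at hts
  linarith

end EventuallyBusemann

theorem GeodesicRay.exists_eventuallyBusemann {d : X → X → ℕ}
    (htri : ∀ x y z, d x z ≤ d x y + d y z) (hcomm : ∀ x y, d x y = d y x)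
    {T : Set ℝ} {γ : ℝ → X} (hT : IsRayDomain T)
    (hγ : GeodesicRay (fun x y => (d x y : ℝ)) T γ) :
    ∃ f : X → ℝ, EventuallyBusemann (fun x y => (d x y : ℝ)) T γ f := by
  have htime : ∀ t ∈ T, (d (γ 0) (γ t) : ℝ) = t := fun t ht =>
    (hγ 0 hT.2.1 t ht).trans (by rw [zero_sub, abs_neg, abs_of_nonneg (hT.1 ht)])
  suffices ∀ y, ∃ c : ℝ, ∀ᶠ t in atTop ⊓ 𝓟 T, (d (γ t) y : ℝ) = t + c by
    choose f hf using this
    exact ⟨f, hf⟩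
  intro y
  -- `d (γ t) y - t` is antitone and bounded below on `T`, and integer-valued since
  -- `t = d (γ 0) (γ t)`; so it attains its infimum and is constant from then on
  let excess : ℝ → ℤ := fun t => d (γ t) y - d (γ 0) (γ t)
  have hexcess : ∀ t ∈ T, (excess t : ℝ) = d (γ t) y - t := fun t ht => by
    simp [excess, htime t ht]
  have hanti : ∀ s ∈ T, ∀ t ∈ T, s ≤ t → excess t ≤ excess s := fun s hs t ht hst => by
    have hst' : (d (γ t) (γ s) : ℝ) = t - s :=
      (hγ t ht s hs).trans (abs_of_nonneg (sub_nonneg.2 hst))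
    have : (d (γ t) y : ℝ) ≤ d (γ t) (γ s) + d (γ s) y := by exact_mod_cast htri _ _ _
    exact_mod_cast (show (excess t : ℝ) ≤ excess s by rw [hexcess t ht, hexcess s hs]; linarith)
  have hbdd : ∀ t ∈ T, -(d (γ 0) y : ℤ) ≤ excess t := fun t ht => by
    have := htri (γ 0) y (γ t)
    rw [hcomm y] at this
    simp only [excess]
    omega
  obtain ⟨m, ⟨t₀, ht₀, rfl⟩, hmin⟩ := Int.exists_least_of_bdd
    (P := fun k => ∃ t ∈ T, excess t = k) ⟨_, fun k ⟨t, ht, hk⟩ => hk ▸ hbdd t ht⟩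
    ⟨_, 0, hT.2.1, rfl⟩
  refine ⟨excess t₀, (eventually_mem_and_ge T t₀).mono fun t ⟨ht, hle⟩ => ?_⟩
  have := le_antisymm (hanti t₀ ht₀ t ht hle) (hmin _ ⟨t, ht, rfl⟩)
  rw [← this, hexcess t ht]
  ring

end Busemann

theorem isRayDomain_range_natCast : IsRayDomain (Set.range ((↑) : ℕ → ℝ)) := by
  refine ⟨?_, ⟨0, Nat.cast_zero⟩, fun M => ?_⟩
  · rintro _ ⟨n, rfl⟩
    exact Set.mem_Ici.2 n.cast_nonneg
  · obtain ⟨n, hn⟩ := exists_nat_gt M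
    exact ⟨n, ⟨n, rfl⟩, hn⟩

theorem mem_uIcc_zero_add_of_mul_nonneg {p q z : ℤ} (hz : z ∈ Set.uIcc 0 p) (hpq : 0 ≤ p * q) :
    z ∈ Set.uIcc 0 (p + q) ∧ z + q ∈ Set.uIcc 0 (p + q) := by
  simp only [Set.mem_uIcc] at hz ⊢
  rcases lt_trichotomy p 0 with hp | rfl | hp
  · have := Int.nonpos_of_mul_nonneg_right hpq hp
    omega
  · omega
  · have := Int.nonneg_of_mul_nonneg_right hpq hp
    omega

/-- `⟨x, y, z⟩` stands for the matrix `!![1, x, z; 0, 1, y; 0, 0, 1]`. -/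
@[ext]
structure Heisenberg where
  x : ℤ
  y : ℤ
  z : ℤ

namespace Heisenberg

instance : Mul Heisenberg := ⟨fun g h => ⟨g.x + h.x, g.y + h.y, g.z + h.z + g.x * h.y⟩⟩
instance : One Heisenberg := ⟨⟨0, 0, 0⟩⟩
instance : Inv Heisenberg := ⟨fun g => ⟨-g.x, -g.y, g.x * g.y - g.z⟩⟩

@[simp] theorem mul_x (g h : Heisenberg) : (g * h).x = g.x + h.x := rfl
@[simp] theorem mul_y (g h : Heisenberg) : (g * h).y = g.y + h.y := rfl
@[simp] theorem mul_z (g h : Heisenberg) : (g * h).z = g.z + h.z + g.x * h.y := rfl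
@[simp] theorem one_x : (1 : Heisenberg).x = 0 := rfl
@[simp] theorem one_y : (1 : Heisenberg).y = 0 := rfl
@[simp] theorem one_z : (1 : Heisenberg).z = 0 := rfl
@[simp] theorem inv_x (g : Heisenberg) : g⁻¹.x = -g.x := rfl
@[simp] theorem inv_y (g : Heisenberg) : g⁻¹.y = -g.y := rfl
@[simp] theorem inv_z (g : Heisenberg) : g⁻¹.z = g.x * g.y - g.z := rfl

instance : Group Heisenberg where
  mul_assoc g h k := by ext <;> simp only [mul_x, mul_y, mul_z] <;> ring
  one_mul g := by ext <;> simp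
  mul_one g := by ext <;> simp
  inv_mul_cancel g := by ext <;> simp

def ofMatrix (M : Matrix (Fin 3) (Fin 3) ℤ) : Heisenberg := ⟨M 0 1, M 1 2, M 0 2⟩

theorem ofMatrix_mul {M N : Matrix (Fin 3) (Fin 3) ℤ} (hM : M ∈ Unitriangular3)
    (hN : N ∈ Unitriangular3) : ofMatrix (M * N) = ofMatrix M * ofMatrix N := by
  obtain ⟨hM₀₀, hM₁₁, hM₂₂, hM₁₀, hM₂₀, hM₂₁⟩ := hM
  obtain ⟨hN₀₀, hN₁₁, hN₂₂, hN₁₀, hN₂₀, hN₂₁⟩ := hN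
  ext <;> simp [ofMatrix, Matrix.mul_apply, Fin.sum_univ_three, *] <;> ring

theorem ofMatrix_bijOn : Set.BijOn ofMatrix Unitriangular3 Set.univ := by
  refine ⟨Set.mapsTo_univ _ _, fun M hM N hN hMN => ?_, fun g _ => ?_⟩
  · obtain ⟨hM₀₀, hM₁₁, hM₂₂, hM₁₀, hM₂₀, hM₂₁⟩ := hM
    obtain ⟨hN₀₀, hN₁₁, hN₂₂, hN₁₀, hN₂₀, hN₂₁⟩ := hN
    simp only [ofMatrix, mk.injEq] at hMN
    ext i j
    fin_cases i <;> fin_cases j <;> simp_all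
  · exact ⟨!![1, g.x, g.z; 0, 1, g.y; 0, 0, 1], by simp [Unitriangular3], rfl⟩

noncomputable def mulEquivOfMatrix {H : Type*} [Group H] (ι : H → Matrix (Fin 3) (Fin 3) ℤ)
    (hinj : Function.Injective ι) (hmul : ∀ g h : H, ι (g * h) = ι g * ι h)
    (hrange : Set.range ι = Unitriangular3) : H ≃* Heisenberg :=
  have hmem : ∀ g, ι g ∈ Unitriangular3 := fun g => hrange ▸ Set.mem_range_self g
  MulEquiv.ofBijective
    (MonoidHom.mk' (fun g => ofMatrix (ι g)) fun g h => by
      rw [hmul]; exact ofMatrix_mul (hmem g) (hmem h))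
    ⟨fun g h hgh => hinj (ofMatrix_bijOn.injOn (hmem g) (hmem h) hgh), fun v => by
      obtain ⟨M, hM, rfl⟩ := ofMatrix_bijOn.surjOn (Set.mem_univ v)
      obtain ⟨g, rfl⟩ := hrange ▸ hM
      exact ⟨g, rfl⟩⟩

def a : Heisenberg := ⟨1, 0, 0⟩
def b : Heisenberg := ⟨0, 1, 0⟩

theorem a_zpow (k : ℤ) : a ^ k = ⟨k, 0, 0⟩ := by
  induction k using Int.induction_on with
  | zero => rfl
  | succ n ih => rw [zpow_add_one, ih]; ext <;> simp [a]
  | pred n ih => rw [zpow_sub_one, ih]; ext <;> simp [a, sub_eq_add_neg]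

theorem b_zpow (k : ℤ) : b ^ k = ⟨0, k, 0⟩ := by
  induction k using Int.induction_on with
  | zero => rfl
  | succ n ih => rw [zpow_add_one, ih]; ext <;> simp [b]
  | pred n ih => rw [zpow_sub_one, ih]; ext <;> simp [b, sub_eq_add_neg]

theorem b_zpow_mul_a_zpow_mul_b_zpow_mul_a_zpow (α β δ ξ : ℤ) :
    b ^ α * a ^ β * b ^ δ * a ^ ξ = ⟨β + ξ, α + δ, β * δ⟩ := by
  simp only [a_zpow, b_zpow]
  ext <;> simp

def gens : Set Heisenberg := {a, a⁻¹, b, b⁻¹}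

theorem a_mem_gens : a ∈ gens := by simp [gens]

theorem b_mem_gens : b ∈ gens := by simp [gens]

theorem inv_gens_subset : gens⁻¹ ⊆ gens := by
  intro s hs
  simp only [gens, Set.mem_inv, Set.mem_insert_iff, Set.mem_singleton_iff,
    inv_eq_iff_eq_inv] at hs ⊢
  tauto

theorem closure_gens : Submonoid.closure gens = ⊤ := by
  have hsub : gens ∪ gens⁻¹ = gens := Set.union_eq_self_of_subset_right inv_gens_subset
  suffices Subgroup.closure gens = ⊤ by
    rw [← hsub, ← Subgroup.closure_toSubmonoid, this, Subgroup.top_toSubmonoid]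
  refine eq_top_iff.2 fun ⟨x, y, z⟩ _ => ?_
  have hmem : ∀ s ∈ gens, ∀ k : ℤ, s ^ k ∈ Subgroup.closure gens := fun s hs k =>
    Subgroup.zpow_mem _ (Subgroup.subset_closure hs) k
  have := b_zpow_mul_a_zpow_mul_b_zpow_mul_a_zpow (y - 1) z 1 (x - z)
  simp only [add_sub_cancel, sub_add_cancel, mul_one] at this
  rw [← this]
  exact mul_mem (mul_mem (mul_mem (hmem b b_mem_gens _) (hmem a a_mem_gens _))
    (hmem b b_mem_gens _)) (hmem a a_mem_gens _)

theorem wordLength_le {g : Heisenberg} (α β δ ξ : ℤ) (hx : g.x = β + ξ) (hy : g.y = α + δ)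
    (hz : g.z = β * δ) :
    wordLength gens g ≤ α.natAbs + β.natAbs + δ.natAbs + ξ.natAbs := by
  have hg : g = b ^ α * a ^ β * b ^ δ * a ^ ξ := by
    rw [b_zpow_mul_a_zpow_mul_b_zpow_mul_a_zpow]
    ext <;> assumption
  have h₁ := wordLength_mul_le closure_gens (b ^ α * a ^ β * b ^ δ) (a ^ ξ)
  have h₂ := wordLength_mul_le closure_gens (b ^ α * a ^ β) (b ^ δ)
  have h₃ := wordLength_mul_le closure_gens (b ^ α) (a ^ β)
  have := wordLength_zpow_le inv_gens_subset b_mem_gens α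
  have := wordLength_zpow_le inv_gens_subset a_mem_gens β
  have := wordLength_zpow_le inv_gens_subset b_mem_gens δ
  have := wordLength_zpow_le inv_gens_subset a_mem_gens ξ
  rw [hg]
  omega

theorem natAbs_add_natAbs_le_length_and_two_dvd {l : List Heisenberg} (hl : ∀ s ∈ l, s ∈ gens) :
    l.prod.x.natAbs + l.prod.y.natAbs ≤ l.length ∧
      2 ∣ l.length + l.prod.x.natAbs + l.prod.y.natAbs := by
  induction l with
  | nil => simp
  | cons s l ih =>
    have := ih fun t ht => hl t (List.mem_cons_of_mem s ht)
    rcases hl s List.mem_cons_self with rfl | rfl | rfl | rfl <;> simp [a, b] <;> omega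

theorem z_mem_uIcc_of_length_eq {l : List Heisenberg} (hl : ∀ s ∈ l, s ∈ gens)
    (hlen : l.length = l.prod.x.natAbs + l.prod.y.natAbs) :
    l.prod.z ∈ Set.uIcc 0 (l.prod.x * l.prod.y) := by
  induction l with
  | nil => simp
  | cons s l ih =>
    have hl' : ∀ t ∈ l, t ∈ gens := fun t ht => hl t (List.mem_cons_of_mem s ht)
    have hbound := (natAbs_add_natAbs_le_length_and_two_dvd hl').1
    have ih' := ih hl'
    rcases hl s List.mem_cons_self with rfl | rfl | rfl | rfl <;>
      simp only [List.prod_cons, List.length_cons, mul_x, mul_y, mul_z, inv_x, inv_y, inv_z, a, b]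
        at hlen ⊢ <;>
      generalize l.prod = p at hbound hlen ih' ⊢
    · have hx : 0 ≤ p.x := by omega
      convert (mem_uIcc_zero_add_of_mul_nonneg (ih' (by omega)) (q := p.y)
        (by nlinarith [mul_nonneg hx (mul_self_nonneg p.y)])).2 using 2 <;> ring
    · have hx : p.x ≤ 0 := by omega
      convert (mem_uIcc_zero_add_of_mul_nonneg (ih' (by omega)) (q := -p.y)
        (by nlinarith [mul_nonneg (neg_nonneg.2 hx) (mul_self_nonneg p.y)])).2 using 2 <;> ring
    · have hy : 0 ≤ p.y := by omega
      convert (mem_uIcc_zero_add_of_mul_nonneg (ih' (by omega)) (q := p.x)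
        (by nlinarith [mul_nonneg hy (mul_self_nonneg p.x)])).1 using 2 <;> ring
    · have hy : p.y ≤ 0 := by omega
      convert (mem_uIcc_zero_add_of_mul_nonneg (ih' (by omega)) (q := -p.x)
        (by nlinarith [mul_nonneg (neg_nonneg.2 hy) (mul_self_nonneg p.x)])).1 using 2 <;> ring

theorem natAbs_add_natAbs_le_wordLength (g : Heisenberg) :
    g.x.natAbs + g.y.natAbs ≤ wordLength gens g := by
  obtain ⟨l, hlen, hl, rfl⟩ := exists_list_length_eq_wordLength closure_gens g
  exact hlen ▸ (natAbs_add_natAbs_le_length_and_two_dvd hl).1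

theorem z_mem_uIcc_of_wordLength_eq {g : Heisenberg}
    (h : wordLength gens g = g.x.natAbs + g.y.natAbs) : g.z ∈ Set.uIcc 0 (g.x * g.y) := by
  obtain ⟨l, hlen, hl, rfl⟩ := exists_list_length_eq_wordLength closure_gens g
  exact z_mem_uIcc_of_length_eq hl (hlen.trans h)

theorem add_two_le_wordLength {g : Heisenberg} (hz : g.z ∉ Set.uIcc 0 (g.x * g.y)) :
    g.x.natAbs + g.y.natAbs + 2 ≤ wordLength gens g := by
  have hne := mt z_mem_uIcc_of_wordLength_eq hz
  obtain ⟨l, hlen, hl, rfl⟩ := exists_list_length_eq_wordLength closure_gens g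
  have := natAbs_add_natAbs_le_length_and_two_dvd hl
  omega

theorem eq_a_zpow_of_wordLength_eq {g : Heisenberg}
    (h : (wordLength gens g : ℤ) = g.x - g.y.natAbs) : g = a ^ g.x := by
  have hle := natAbs_add_natAbs_le_wordLength g
  have hy : g.y = 0 := by omega
  have hz := z_mem_uIcc_of_wordLength_eq (g := g) (by omega)
  rw [hy, mul_zero, Set.uIcc_self, Set.mem_singleton_iff] at hz
  rw [a_zpow]
  ext <;> simp [hy, hz]

theorem wordLength_of_one_le_y {g : Heisenberg} (hy : 1 ≤ g.y) (hz : 0 ≤ g.z) (hzx : g.z ≤ g.x) :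
    (wordLength gens g : ℤ) = g.x + g.y := by
  have := wordLength_le (g.y - 1) g.z 1 (g.x - g.z) (by ring) (by ring) (by ring)
  have := natAbs_add_natAbs_le_wordLength g
  omega

theorem wordLength_of_y_nonpos {g : Heisenberg} (hy : g.y ≤ 0) (hz : 0 < g.z) (hzx : g.z ≤ g.x) :
    (wordLength gens g : ℤ) = g.x - g.y + 2 := by
  have := wordLength_le (g.y - 1) g.z 1 (g.x - g.z) (by ring) (by ring) (by ring)
  have := add_two_le_wordLength (g := g) fun h => by
    rcases Set.mem_uIcc.1 h with ⟨-, h⟩ | ⟨-, h⟩ <;> nlinarith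
  omega

theorem wordLength_a_zpow_inv_mul {k : ℤ} (hk : 1 ≤ k) :
    (wordLength gens ((a ^ k)⁻¹ * ⟨0, -1, 1⟩) : ℤ) = k + 3 := by
  have hg : (⟨0, -1, 1⟩ : Heisenberg)⁻¹ * a ^ k = ⟨k, 1, -1⟩ := by
    rw [a_zpow]
    ext <;> simp
  rw [← wordLength_inv inv_gens_subset, mul_inv_rev, inv_inv, hg]
  have := wordLength_le (g := ⟨k, 1, -1⟩) 2 1 (-1) (k - 1) (by ring) (by ring) (by ring)
  have := add_two_le_wordLength (g := ⟨k, 1, -1⟩) fun h => by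
    rcases Set.mem_uIcc.1 h with ⟨h, -⟩ | ⟨h, -⟩ <;> dsimp only at h <;> omega
  dsimp only at *
  omega

def psi (n : ℕ) : Heisenberg := ⟨n, 1, n / 2⟩

theorem eventually_wordLength_psi_inv_mul (v : Heisenberg) :
    ∀ᶠ n in atTop, (wordLength gens ((psi n)⁻¹ * v) : ℤ) = n + 1 + (v.y.natAbs - v.x) := by
  set c := v.x * v.y - v.z - v.x
  refine eventually_atTop.2 ⟨2 * (c.natAbs + v.x.natAbs + v.y.natAbs) + 8, fun n hn => ?_⟩
  have hg : v⁻¹ * psi n = ⟨n - v.x, 1 - v.y, n / 2 + c⟩ := by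
    ext <;> simp [psi, c] <;> ring
  rw [← wordLength_inv inv_gens_subset, mul_inv_rev, inv_inv, hg]
  rcases le_or_gt v.y 0 with hy | hy
  · have := wordLength_of_one_le_y (g := ⟨n - v.x, 1 - v.y, n / 2 + c⟩)
      (by dsimp only; omega) (by dsimp only; omega) (by dsimp only; omega)
    dsimp only at this
    omega
  · have := wordLength_of_y_nonpos (g := ⟨n - v.x, 1 - v.y, n / 2 + c⟩)
      (by dsimp only; omega) (by dsimp only; omega) (by dsimp only; omega)
    dsimp only at this
    omega

def busemann (v : Heisenberg) : ℤ := v.y.natAbs - v.x - 1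

/-- The truncated shift by `2` puts `ray 0 = psi 0 = b`, at distance `n + 2` from `psi n`, at
distance `t` from `ray t`. -/
noncomputable def ray (t : ℝ) : Heisenberg := psi (⌊t⌋₊ - 2)

theorem eventuallyBusemann_ray :
    EventuallyBusemann (fun g h => (wordDist gens g h : ℝ)) (Set.range ((↑) : ℕ → ℝ)) ray
      fun v => (busemann v : ℝ) := by
  intro v
  obtain ⟨N, hN⟩ := eventually_atTop.1 (eventually_wordLength_psi_inv_mul v)
  filter_upwards [eventually_mem_and_ge (Set.range ((↑) : ℕ → ℝ)) (N + 2 : ℕ)]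
    with t ⟨⟨m, hmt⟩, hm⟩
  subst hmt
  have hm : N + 2 ≤ m := by exact_mod_cast hm
  have hW : (wordLength gens ((psi (m - 2))⁻¹ * v) : ℤ) = m + busemann v := by
    rw [hN (m - 2) (by omega), busemann]
    omega
  simp only [ray, Nat.floor_natCast, wordDist_eq_wordLength]
  exact_mod_cast hW

theorem exists_ne_busemann_of_geodesicRay {T : Set ℝ} {γ : ℝ → Heisenberg} {f : Heisenberg → ℝ}
    (hT : IsRayDomain T) (hγ : GeodesicRay (fun g h => (wordDist gens g h : ℝ)) T γ)
    (hf : EventuallyBusemann (fun g h => (wordDist gens g h : ℝ)) T γ f) :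
    ∃ v w, f v - f w ≠ busemann v - busemann w := by
  by_contra! hfb
  have := hT.neBot
  obtain ⟨t, ht1, hty, ht, hlarge⟩ :=
    ((hf 1).and ((hf ⟨0, -1, 1⟩).and (eventually_mem_and_ge T (1 - f 1)))).exists
  have hgt : f (γ t) = -t := hf.apply_eq_neg hT hγ ht
  simp only [wordDist_eq_wordLength, mul_one, wordLength_inv inv_gens_subset] at ht1 hty
  have hg1 := hfb (γ t) 1
  have hy1 := hfb ⟨0, -1, 1⟩ 1
  simp only [busemann, one_x, one_y] at hg1 hy1
  push_cast at hg1 hy1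
  -- `d(1, γ t) = x - |y|` meets the bound `d(1, γ t) ≥ |x| + |y|`, so `γ t` is a power of `a`
  have hW : (wordLength gens (γ t) : ℤ) = (γ t).x - (γ t).y.natAbs := by
    have : ((wordLength gens (γ t) : ℤ) : ℝ) = (((γ t).x - (γ t).y.natAbs : ℤ) : ℝ) := by
      push_cast
      linarith
    exact_mod_cast this
  have hga := eq_a_zpow_of_wordLength_eq hW
  have hx : 1 ≤ (γ t).x := by
    have : ((1 : ℤ) : ℝ) ≤ (wordLength gens (γ t) : ℤ) := by
      push_cast
      linarith
    have := Int.cast_le.1 this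
    omega
  have hdist := wordLength_a_zpow_inv_mul hx
  rw [← hga] at hdist
  have : (((γ t).x + 3 : ℤ) : ℝ) = (((γ t).x - (γ t).y.natAbs : ℤ) : ℝ) + 1 := by
    rw [← hdist, ← hW]
    push_cast
    linarith
  push_cast at this
  linarith [abs_nonneg ((γ t).y : ℝ)]

theorem hasNonBusemannPoint :
    HasNonBusemannPoint fun g h : Heisenberg => (wordDist gens g h : ℝ) := by
  refine ⟨_, ray, isRayDomain_range_natCast,
    eventuallyBusemann_ray.weaklyGeodesicRay (by simp [ray, psi, busemann]),
    fun T' γ' hT' hγ' => ?_⟩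
  obtain ⟨f, hf⟩ := hγ'.exists_eventuallyBusemann (wordDist_triangle closure_gens)
    (wordDist_comm inv_gens_subset) hT'
  obtain ⟨v, w, hvw⟩ := exists_ne_busemann_of_geodesicRay hT' hγ' hf
  exact ⟨v, w, _, _, eventuallyBusemann_ray.rayLimit v w, hf.rayLimit v w, fun h => hvw h.symm⟩

end Heisenberg

/-- Let `H` be the discrete Heisenberg group (any group identified, via an
injective multiplicative map `ι`, with the group of 3×3 upper unitriangular integer
matrices), with `a`, `b` the standard generators. Then the metric boundary of the Cayley
graph of `H` with generating set `S = {a, a⁻¹, b, b⁻¹}` contains a point which is not a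
Busemann point. -/
theorem stmt19 {H : Type*} [Group H] (ι : H → Matrix (Fin 3) (Fin 3) ℤ)
    (hinj : Function.Injective ι)
    (hmul : ∀ g h : H, ι (g * h) = ι g * ι h)
    (hrange : Set.range ι = Unitriangular3)
    (a b : H)
    (ha : ι a = !![1, 1, 0; 0, 1, 0; 0, 0, 1])
    (hb : ι b = !![1, 0, 0; 0, 1, 1; 0, 0, 1]) :
    ∃ T : Set ℝ, ∃ γ : ℝ → H, IsRayDomain T ∧
      WeaklyGeodesicRay (fun g h => (wordDist {a, a⁻¹, b, b⁻¹} g h : ℝ)) T γ ∧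
      ∀ (T' : Set ℝ) (γ' : ℝ → H), IsRayDomain T' →
        GeodesicRay (fun g h => (wordDist {a, a⁻¹, b, b⁻¹} g h : ℝ)) T' γ' →
        ∃ (y z : H) (L L' : ℝ),
          RayLimit (fun g h => (wordDist {a, a⁻¹, b, b⁻¹} g h : ℝ)) T γ y z L ∧
          RayLimit (fun g h => (wordDist {a, a⁻¹, b, b⁻¹} g h : ℝ)) T' γ' y z L' ∧
          L ≠ L' := by
  set e := Heisenberg.mulEquivOfMatrix ι hinj hmul hrange
  have hgens : e '' {a, a⁻¹, b, b⁻¹} = Heisenberg.gens := by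
    have hea : e a = Heisenberg.a := congrArg Heisenberg.ofMatrix ha
    have heb : e b = Heisenberg.b := congrArg Heisenberg.ofMatrix hb
    simp only [Set.image_insert_eq, Set.image_singleton, map_inv, hea, heb, Heisenberg.gens]
  refine Heisenberg.hasNonBusemannPoint.of_equiv e.toEquiv fun g h => ?_
  rw [MulEquiv.toEquiv_eq_coe, MulEquiv.coe_toEquiv, ← hgens, wordDist_map]
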